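/- Let n ≥ 1, let K be a convex body in ℝⁿ that is a tangential body of a convex body E with nonempty interior. Then for every λ with −1 < λ ≤ 0, the inner parallel body of K at distance |λ| relative to E equals the dilate (1+λ)K, i.e. K ∼ |λ|E = (1+λ)K. -/
import Mathlib


open scoped Pointwise InnerProductSpace
open MeasureTheory Metric

noncomputable section

/-- Euclidean n-space. -/
abbrev Vec (n : ℕ) := EuclideanSpace ℝ (Fin n)

/-- A convex body: a nonempty compact convex set. -/
def IsConvexBody {n : ℕ} (K : Set (Vec n)) : Prop :=
  Convex ℝ K ∧ IsCompact K ∧ K.Nonempty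

/-- Support function `h(K,u)`. -/
def suppFn {n : ℕ} (K : Set (Vec n)) (u : Vec n) : ℝ :=
  sSup ((fun x => ⟪x, u⟫_ℝ) '' K)

/-- `u` is an (outer) normal vector of `K` at `p`. -/
def IsNormalAt {n : ℕ} (K : Set (Vec n)) (p u : Vec n) : Prop :=
  ∀ x ∈ K, ⟪x, u⟫_ℝ ≤ ⟪p, u⟫_ℝ

/-- The set `U(K)` of 0-extreme (unit) normal vectors of `K`: unit vectors which cannot be
written as a linear combination of two linearly independent normal vectors at one and the
same boundary point of `K`. -/
def extremeNormals {n : ℕ} (K : Set (Vec n)) : Set (Vec n) :=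
  {u | ‖u‖ = 1 ∧ ¬ ∃ p ∈ frontier K, ∃ v w : Vec n,
    IsNormalAt K p v ∧ IsNormalAt K p w ∧ LinearIndependent ℝ ![v, w] ∧
    ∃ a b : ℝ, u = a • v + b • w}

/-- The inradius `r(K;E)` of `K` relative to `E`. -/
def inrad {n : ℕ} (K E : Set (Vec n)) : ℝ :=
  sSup {r : ℝ | 0 ≤ r ∧ ∃ x : Vec n, x +ᵥ r • E ⊆ K}

/-- The inner parallel body `K_λ = K ∼ |λ|E = {x : x + |λ|E ⊆ K}`. -/
def innerPar {n : ℕ} (K E : Set (Vec n)) (lam : ℝ) : Set (Vec n) :=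
  {x | x +ᵥ |lam| • E ⊆ K}

/-- The form body `K^*` of `K` with respect to `E`. -/
def formBody {n : ℕ} (K E : Set (Vec n)) : Set (Vec n) :=
  {x | ∀ u ∈ extremeNormals K, ⟪x, u⟫_ℝ ≤ suppFn E u}

/-- The body `K(μ) = {x : ⟨x,u⟩ ≤ h(K,u) + μ h(E,u), u ∈ U(K)}`. -/
def parSet {n : ℕ} (K E : Set (Vec n)) (μ : ℝ) : Set (Vec n) :=
  {x | ∀ u ∈ extremeNormals K, ⟪x, u⟫_ℝ ≤ suppFn K u + μ * suppFn E u}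

/-- A convex body is regular if every boundary point has a unique (unit outer normal of a)
supporting hyperplane. -/
def IsRegularBody {n : ℕ} (K : Set (Vec n)) : Prop :=
  ∀ p ∈ frontier K, ∃! u : Vec n, ‖u‖ = 1 ∧ IsNormalAt K p u

/-- `K` is a tangential body of `E ⊆ K`: through each boundary point of `K` there is a
supporting hyperplane of `K` that also supports `E`. -/
def IsTangentialBody {n : ℕ} (K E : Set (Vec n)) : Prop :=
  E ⊆ K ∧ ∀ p ∈ frontier K, ∃ u : Vec n, u ≠ 0 ∧ IsNormalAt K p u ∧
    (∀ y ∈ E, ⟪y, u⟫_ℝ ≤ ⟪p, u⟫_ℝ) ∧ ∃ q ∈ E, ⟪q, u⟫_ℝ = ⟪p, u⟫_ℝ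

/-- Volume: `n`-dimensional Lebesgue measure (as a real number). -/
def vol {n : ℕ} (M : Set (Vec n)) : ℝ := (volume M).toReal

/-- Surface area: the `(n-1)`-dimensional (Hausdorff) measure of the boundary. -/
def sArea {n : ℕ} (M : Set (Vec n)) : ℝ := (μH[(n - 1 : ℝ)] (frontier M)).toReal

/-- The Euclidean unit ball `B_n`. -/
def unitBall (n : ℕ) : Set (Vec n) := closedBall (0 : Vec n) 1

/-- If `K` is a tangential body of `E`, then for `-1 < λ ≤ 0` the inner
parallel body `K ∼ |λ|E` equals `(1+λ)K`. -/
theorem stmt0 {n : ℕ} (hn : 1 ≤ n) (K E : Set (Vec n))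
    (hK : IsConvexBody K) (hE : IsConvexBody E) (hEint : (interior E).Nonempty)
    (hT : IsTangentialBody K E) :
    ∀ lam : ℝ, -1 < lam → lam ≤ 0 → innerPar K E lam = (1 + lam) • K := by
  intro lam hlam1 hlam0
  obtain ⟨hKc, hKcomp, hKne⟩ := hK
  obtain ⟨hEK, hTang⟩ := hT
  have habs : |lam| = -lam := abs_of_nonpos hlam0
  have hc0 : (0:ℝ) < 1 + lam := by linarith
  have hKclosed : IsClosed K := hKcomp.isClosed
  ext x
  simp only [innerPar, Set.mem_setOf_eq, habs]
  constructor
  · intro hx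
    rw [Set.mem_smul_set_iff_inv_smul_mem₀ (ne_of_gt hc0)]
    set y := (1 + lam)⁻¹ • x with hy
    by_contra hyK
    obtain ⟨z, hzE⟩ := hEint
    have hzK : z ∈ interior K := interior_mono hEK hzE
    have hzK' : z ∈ K := interior_subset hzK
    set f : ℝ → Vec n := fun t => z + t • (y - z) with hf
    have hfc : Continuous f := by fun_prop
    set S : Set ℝ := Set.Icc (0:ℝ) 1 ∩ f ⁻¹' K with hS
    have hSclosed : IsClosed S := isClosed_Icc.inter (hKclosed.preimage hfc)
    have hS0 : (0:ℝ) ∈ S := ⟨⟨le_refl 0, zero_le_one⟩, by simp [hf, hzK']⟩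
    have hSbdd : BddAbove S := ⟨1, fun t ht => ht.1.2⟩
    have hθS : sSup S ∈ S := hSclosed.csSup_mem ⟨0, hS0⟩ hSbdd
    set θ := sSup S with hθ
    have hθ1 : θ ≤ 1 := hθS.1.2
    have hθ0 : 0 ≤ θ := hθS.1.1
    set p := f θ with hp
    have hpK : p ∈ K := hθS.2
    have hθne1 : θ ≠ 1 := by
      intro h
      apply hyK
      have h2 := hθS.2
      rw [h] at h2
      simpa [hf] using h2
    have hθlt1 : θ < 1 := lt_of_le_of_ne hθ1 hθne1
    have hpfront : p ∈ frontier K := by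
      rw [hKclosed.frontier_eq]
      refine ⟨hpK, ?_⟩
      intro hpint
      obtain ⟨ε, hε, hball⟩ := Metric.isOpen_iff.1 isOpen_interior p hpint
      set δ := min (1 - θ) (ε / (‖y - z‖ + 1)) with hδ
      have hny : (0:ℝ) < ‖y - z‖ + 1 := by positivity
      have hδ0 : 0 < δ := lt_min (by linarith) (div_pos hε hny)
      have hδ1 : δ ≤ 1 - θ := min_le_left _ _
      have hδ2 : δ ≤ ε / (‖y - z‖ + 1) := min_le_right _ _
      have hdist : dist (f (θ + δ)) p < ε := by
        have heq : f (θ + δ) - p = δ • (y - z) := by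
          simp only [hf, hp, add_smul]
          abel
        rw [dist_eq_norm, heq, norm_smul, Real.norm_eq_abs, abs_of_pos hδ0]
        calc δ * ‖y - z‖ ≤ (ε / (‖y - z‖ + 1)) * ‖y - z‖ := by
              apply mul_le_mul_of_nonneg_right hδ2 (norm_nonneg _)
          _ < ε := by
              rw [div_mul_eq_mul_div, div_lt_iff₀ hny]
              nlinarith [norm_nonneg (y - z)]
      have hmem : θ + δ ∈ S :=
        Set.mem_inter ⟨by linarith, by linarith⟩
          (Set.mem_preimage.mpr (interior_subset (hball (Metric.mem_ball.2 hdist))))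
      have := le_csSup hSbdd hmem
      linarith
    have hθpos : 0 < θ := by
      rcases lt_or_eq_of_le hθ0 with h | h
      · exact h
      · exfalso
        have hz : p = z := by simp [hp, hf, ← h]
        rw [hKclosed.frontier_eq] at hpfront
        exact hpfront.2 (hz ▸ hzK)
    obtain ⟨u, hu0, hnorm, hEle, q, hqE, hq⟩ := hTang p hpfront
    have hun : (0:ℝ) < ‖u‖ := norm_pos_iff.2 hu0
    -- strict inequality at interior point z
    have hzp : ⟪z, u⟫_ℝ < ⟪p, u⟫_ℝ := by
      obtain ⟨ε, hε, hball⟩ := Metric.isOpen_iff.1 isOpen_interior z hzK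
      have hwK : z + (ε / 2 / ‖u‖) • u ∈ K := by
        apply interior_subset
        apply hball
        rw [Metric.mem_ball, dist_eq_norm]
        have : z + (ε / 2 / ‖u‖) • u - z = (ε / 2 / ‖u‖) • u := by abel
        rw [this, norm_smul, Real.norm_eq_abs, abs_of_pos (by positivity)]
        rw [div_mul_cancel₀ _ (ne_of_gt hun)]
        linarith
      have h2 := hnorm _ hwK
      rw [inner_add_left, real_inner_smul_left, real_inner_self_eq_norm_sq] at h2
      have hpos : 0 < ε / 2 / ‖u‖ * ‖u‖ ^ 2 := by positivity
      linarith
    have hpy : ⟪p, u⟫_ℝ < ⟪y, u⟫_ℝ := by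
      have hpe : ⟪p, u⟫_ℝ = ⟪z, u⟫_ℝ + θ * (⟪y, u⟫_ℝ - ⟪z, u⟫_ℝ) := by
        simp only [hp, hf, inner_add_left, real_inner_smul_left, inner_sub_left]
      nlinarith
    have hxq : x + (-lam) • q ∈ K := by
      apply hx
      exact Set.vadd_mem_vadd_set (Set.smul_mem_smul_set hqE)
    have h3 := hnorm _ hxq
    have hxy : x = (1 + lam) • y := (smul_inv_smul₀ (ne_of_gt hc0) x).symm
    rw [inner_add_left, real_inner_smul_left, hxy, real_inner_smul_left, hq] at h3
    nlinarith
  · intro hx w hw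
    obtain ⟨k, hkK, rfl⟩ := hx
    rw [Set.mem_vadd_set] at hw
    obtain ⟨e', ⟨e, heE, rfl⟩, rfl⟩ := hw
    have := hKc hkK (hEK heE) (le_of_lt hc0) (neg_nonneg.2 hlam0) (by ring)
    simpa [vadd_eq_add] using this
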